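/- arXiv:2009.09461 — 3 statements merged into one kernel-verified Lean document; each statement's English description precedes it below -/
import Mathlib

section
/- A zigzag snake graph with d tiles has exactly d+1 perfect matchings. -/
/-- Lower-left corner positions of the tiles of the zigzag snake graph with tiles
glued alternately to the east and to the north. -/
def zigzagCorner : ℕ → ℤ × ℤ
  | 0 => (0, 0)
  | k + 1 => zigzagCorner k + (if k % 2 = 0 then (1, 0) else (0, 1))

/-- `v` is one of the four corners of the unit square tile with lower-left corner `c`. -/
def IsTileCorner (v c : ℤ × ℤ) : Prop :=
  v = c ∨ v = c + (1, 0) ∨ v = c + (0, 1) ∨ v = c + (1, 1)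

/-- Two lattice points at distance one (joined by a horizontal or vertical unit edge). -/
def UnitAdj (u v : ℤ × ℤ) : Prop :=
  u - v = (1, 0) ∨ v - u = (1, 0) ∨ u - v = (0, 1) ∨ v - u = (0, 1)

/-- The vertices of the zigzag snake graph with `d` tiles. -/
def zigzagVerts (d : ℕ) : Set (ℤ × ℤ) :=
  {v | ∃ k < d, IsTileCorner v (zigzagCorner k)}

/-- The zigzag snake graph with `d` tiles: edges are the unit sides of the tiles. -/
def zigzagGraph (d : ℕ) : SimpleGraph (zigzagVerts d) where
  Adj u v := UnitAdj u.1 v.1 ∧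
    ∃ k < d, IsTileCorner u.1 (zigzagCorner k) ∧ IsTileCorner v.1 (zigzagCorner k)
  symm := by
    constructor
    rintro u v ⟨h1, k, hk, hu, hv⟩
    refine ⟨?_, k, hk, hv, hu⟩
    unfold UnitAdj at h1 ⊢
    tauto
  loopless := by
    constructor
    rintro v ⟨h1, -⟩
    rcases h1 with h | h | h | h <;> simp [Prod.ext_iff] at h

/-!
Write `c 0, …, c (d + 1)` for the spine corners (`zigzagCorner`) and `x k` for the outer corner of
tile `k` (`zigzagOuter`): the edges are the spine path together with `x k — c k` and
`x k — c (k + 2)`. In a perfect matching let `j` be the first tile whose outer corner is not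
matched to `c j`. Then `c j` can only be matched to `c (j + 1)`, and inductively every later `x i`
to `c (i + 2)`. So a perfect matching is determined by its cut `j ∈ {0, …, d}`, and every cut gives
one.
-/

open SimpleGraph

namespace SimpleGraph.Subgraph

theorem IsPerfectMatching.eq_of_le {V : Type*} {G : SimpleGraph V} {M M' : G.Subgraph}
    (hM : M.IsPerfectMatching) (hM' : M'.IsMatching) (h : M ≤ M') : M = M' := by
  refine le_antisymm h ⟨fun v _ => hM.2 v, fun v w hvw => ?_⟩
  obtain ⟨w', hvw'⟩ := (hM.1 (hM.2 v)).exists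
  rwa [hM'.eq_of_adj_left hvw (h.2 hvw')]

variable {α : Type*} {s : Set α} {G : SimpleGraph s} {M : G.Subgraph} {a b b' : α}

def ValAdj (M : G.Subgraph) (a b : α) : Prop :=
  ∃ (ha : a ∈ s) (hb : b ∈ s), M.Adj ⟨a, ha⟩ ⟨b, hb⟩

theorem ValAdj.symm (h : M.ValAdj a b) : M.ValAdj b a :=
  let ⟨ha, hb, hab⟩ := h
  ⟨hb, ha, hab.symm⟩

theorem IsMatching.valAdj_unique (hM : M.IsMatching) (h : M.ValAdj a b) (h' : M.ValAdj a b') :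
    b = b' := by
  obtain ⟨_, _, hab⟩ := h
  obtain ⟨_, _, hab'⟩ := h'
  exact congrArg Subtype.val (hM.eq_of_adj_left hab hab')

theorem IsPerfectMatching.exists_valAdj (hM : M.IsPerfectMatching) (ha : a ∈ s) :
    ∃ b, M.ValAdj a b := by
  obtain ⟨w, hw⟩ := (hM.1 (hM.2 ⟨a, ha⟩)).exists
  exact ⟨w, ha, w.2, hw⟩

end SimpleGraph.Subgraph

def zigzagOuter (k : ℕ) : ℤ × ℤ := zigzagCorner k + zigzagCorner (k + 2) - zigzagCorner (k + 1)

lemma zigzagCorner_eq (k : ℕ) : zigzagCorner k = ((((k + 1) / 2 : ℕ) : ℤ), ((k / 2 : ℕ) : ℤ)) := by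
  induction k with
  | zero => rfl
  | succ k ih =>
    rw [zigzagCorner.eq_2, ih]
    split_ifs <;> simp only [Prod.mk_add_mk, Prod.ext_iff] <;> omega

lemma zigzagOuter_eq (k : ℕ) : zigzagOuter k =
    ((((k + 1) / 2 : ℕ) : ℤ) + ((k + 3) / 2 : ℕ) - ((k + 2) / 2 : ℕ),
      ((k / 2 : ℕ) : ℤ) + ((k + 2) / 2 : ℕ) - ((k + 1) / 2 : ℕ)) := by
  simp only [zigzagOuter, zigzagCorner_eq, Prod.mk_add_mk, Prod.mk_sub_mk]

lemma zigzagCorner_inj {a b : ℕ} : zigzagCorner a = zigzagCorner b ↔ a = b := by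
  simp only [zigzagCorner_eq, Prod.ext_iff]; omega

lemma zigzagOuter_inj {a b : ℕ} : zigzagOuter a = zigzagOuter b ↔ a = b := by
  simp only [zigzagOuter_eq, Prod.ext_iff]; omega

lemma zigzagCorner_ne_zigzagOuter (a b : ℕ) : zigzagCorner a ≠ zigzagOuter b := by
  simp only [zigzagCorner_eq, zigzagOuter_eq, ne_eq, Prod.ext_iff]; omega

lemma unitAdj_comm {a b : ℤ × ℤ} : UnitAdj a b ↔ UnitAdj b a := by
  unfold UnitAdj; tauto

lemma not_unitAdj_self (a : ℤ × ℤ) : ¬ UnitAdj a a := by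
  simp [UnitAdj, Prod.ext_iff]

lemma unitAdj_zigzagCorner_iff {a b : ℕ} :
    UnitAdj (zigzagCorner a) (zigzagCorner b) ↔ b = a + 1 ∨ a = b + 1 := by
  simp only [UnitAdj, zigzagCorner_eq, Prod.mk_sub_mk, Prod.ext_iff]; omega

lemma unitAdj_zigzagOuter_iff {a b : ℕ} :
    UnitAdj (zigzagOuter a) (zigzagCorner b) ↔ b = a ∨ b = a + 2 := by
  simp only [UnitAdj, zigzagCorner_eq, zigzagOuter_eq, Prod.mk_sub_mk, Prod.ext_iff]; omega

lemma isTileCorner_zigzagCorner_iff {v : ℤ × ℤ} {k : ℕ} :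
    IsTileCorner v (zigzagCorner k) ↔ v = zigzagCorner k ∨ v = zigzagCorner (k + 1) ∨
      v = zigzagCorner (k + 2) ∨ v = zigzagOuter k := by
  obtain ⟨v1, v2⟩ := v
  simp only [IsTileCorner, zigzagCorner_eq, zigzagOuter_eq, Prod.ext_iff, Prod.mk_add_mk]
  omega

lemma zigzagCorner_isTileCorner_iff {m k : ℕ} :
    IsTileCorner (zigzagCorner m) (zigzagCorner k) ↔ k ≤ m ∧ m ≤ k + 2 := by
  simp only [isTileCorner_zigzagCorner_iff, zigzagCorner_inj, zigzagCorner_ne_zigzagOuter,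
    or_false]
  omega

lemma zigzagOuter_isTileCorner_iff {m k : ℕ} :
    IsTileCorner (zigzagOuter m) (zigzagCorner k) ↔ m = k := by
  simp only [isTileCorner_zigzagCorner_iff, zigzagOuter_inj, (zigzagCorner_ne_zigzagOuter _ _).symm,
    false_or]

section Vertices

variable {d : ℕ}

lemma zigzagCorner_mem_zigzagVerts_iff {m : ℕ} :
    zigzagCorner m ∈ zigzagVerts d ↔ 0 < d ∧ m ≤ d + 1 := by
  simp only [zigzagVerts, Set.mem_ofPred_eq, zigzagCorner_isTileCorner_iff]
  constructor
  · rintro ⟨k, hk, -, hmk⟩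
    omega
  · rintro ⟨hd, hm⟩
    exact ⟨min m (d - 1), by omega, by omega, by omega⟩

lemma zigzagOuter_mem_zigzagVerts_iff {m : ℕ} : zigzagOuter m ∈ zigzagVerts d ↔ m < d := by
  simp only [zigzagVerts, Set.mem_ofPred_eq, zigzagOuter_isTileCorner_iff, exists_eq_right']

lemma exists_eq_of_mem_zigzagVerts {v : ℤ × ℤ} (hv : v ∈ zigzagVerts d) :
    (∃ m, v = zigzagCorner m) ∨ ∃ m, v = zigzagOuter m := by
  obtain ⟨k, -, hk⟩ := hv
  rcases isTileCorner_zigzagCorner_iff.1 hk with h | h | h | h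
  exacts [Or.inl ⟨_, h⟩, Or.inl ⟨_, h⟩, Or.inl ⟨_, h⟩, Or.inr ⟨_, h⟩]

end Vertices

section Adjacency

variable {d : ℕ} {u v : zigzagVerts d}

lemma zigzagGraph_adj_of_zigzagCorner {j : ℕ} (hu : u.1 = zigzagCorner j)
    (hv : v.1 = zigzagCorner (j + 1)) : (zigzagGraph d).Adj u v := by
  have hjd := zigzagCorner_mem_zigzagVerts_iff.1 (hv ▸ v.2)
  refine ⟨?_, min j (d - 1), by omega, ?_, ?_⟩
  · rw [hu, hv, unitAdj_zigzagCorner_iff]; omega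
  · rw [hu, zigzagCorner_isTileCorner_iff]; omega
  · rw [hv, zigzagCorner_isTileCorner_iff]; omega

lemma zigzagGraph_adj_of_zigzagOuter {i : ℕ} (hu : u.1 = zigzagOuter i)
    (hv : v.1 = zigzagCorner i ∨ v.1 = zigzagCorner (i + 2)) : (zigzagGraph d).Adj u v := by
  have hid := zigzagOuter_mem_zigzagVerts_iff.1 (hu ▸ u.2)
  refine ⟨?_, i, hid, ?_, ?_⟩
  · rcases hv with hv | hv <;> rw [hu, hv, unitAdj_zigzagOuter_iff] <;> omega
  · rw [hu, zigzagOuter_isTileCorner_iff]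
  · rcases hv with hv | hv <;> rw [hv, zigzagCorner_isTileCorner_iff] <;> omega

lemma eq_of_zigzagGraph_adj_zigzagOuter {i : ℕ} (h : (zigzagGraph d).Adj u v)
    (hu : u.1 = zigzagOuter i) : v.1 = zigzagCorner i ∨ v.1 = zigzagCorner (i + 2) := by
  obtain ⟨hunit, k, -, hu', hv'⟩ := h
  rw [hu, zigzagOuter_isTileCorner_iff] at hu'
  subst hu'
  rw [hu] at hunit
  rcases isTileCorner_zigzagCorner_iff.1 hv' with hv | hv | hv | hv <;> rw [hv] at hunit ⊢
  · exact Or.inl rfl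
  · exact absurd (unitAdj_zigzagOuter_iff.1 hunit) (by omega)
  · exact Or.inr rfl
  · exact absurd hunit (not_unitAdj_self _)

lemma eq_of_zigzagGraph_adj_zigzagCorner {j : ℕ} (h : (zigzagGraph d).Adj u v)
    (hu : u.1 = zigzagCorner j) :
    v.1 = zigzagCorner (j + 1) ∨ (0 < j ∧ v.1 = zigzagCorner (j - 1)) ∨
      v.1 = zigzagOuter j ∨ (2 ≤ j ∧ v.1 = zigzagOuter (j - 2)) := by
  obtain ⟨hunit, k, -, hu', hv'⟩ := h
  rw [hu, zigzagCorner_isTileCorner_iff] at hu'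
  rw [hu] at hunit
  rcases isTileCorner_zigzagCorner_iff.1 hv' with hv | hv | hv | hv <;>
    rw [hv] at hunit ⊢ <;>
    simp only [unitAdj_zigzagCorner_iff, unitAdj_comm (a := zigzagCorner j),
      unitAdj_zigzagOuter_iff, zigzagCorner_inj, zigzagOuter_inj, zigzagCorner_ne_zigzagOuter,
      (zigzagCorner_ne_zigzagOuter _ _).symm, false_or, and_false] at hunit ⊢ <;>
    omega

end Adjacency

section CutMatching

variable {d : ℕ}

def zigzagCutEdge (j : ℕ) (a b : ℤ × ℤ) : Prop :=
  (a = zigzagCorner j ∧ b = zigzagCorner (j + 1)) ∨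
    (∃ i < j, a = zigzagOuter i ∧ b = zigzagCorner i) ∨
    (∃ i, j ≤ i ∧ a = zigzagOuter i ∧ b = zigzagCorner (i + 2))

lemma zigzagCutEdge_unique {j : ℕ} {a b b' : ℤ × ℤ}
    (h : Relation.SymmGen (zigzagCutEdge j) a b) (h' : Relation.SymmGen (zigzagCutEdge j) a b') :
    b = b' := by
  rcases h with (⟨rfl, rfl⟩ | ⟨i, hi, rfl, rfl⟩ | ⟨i, hi, rfl, rfl⟩) |
      (⟨rfl, rfl⟩ | ⟨i, hi, rfl, rfl⟩ | ⟨i, hi, rfl, rfl⟩) <;>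
    rcases h' with (⟨ha, rfl⟩ | ⟨i', hi', ha, rfl⟩ | ⟨i', hi', ha, rfl⟩) |
      (⟨rfl, ha⟩ | ⟨i', hi', rfl, ha⟩ | ⟨i', hi', rfl, ha⟩) <;>
    simp only [zigzagCorner_inj, zigzagOuter_inj, zigzagCorner_ne_zigzagOuter,
      (zigzagCorner_ne_zigzagOuter _ _).symm] at ha ⊢ <;>
    omega

lemma exists_zigzagCutEdge {j : ℕ} (hj : j ≤ d) {a : ℤ × ℤ} (ha : a ∈ zigzagVerts d) :
    ∃ b ∈ zigzagVerts d, Relation.SymmGen (zigzagCutEdge j) a b := by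
  rcases exists_eq_of_mem_zigzagVerts ha with ⟨m, rfl⟩ | ⟨m, rfl⟩
  · have hm := zigzagCorner_mem_zigzagVerts_iff.1 ha
    have hcorner {n : ℕ} (hn : n ≤ d + 1) : zigzagCorner n ∈ zigzagVerts d :=
      zigzagCorner_mem_zigzagVerts_iff.2 ⟨hm.1, hn⟩
    obtain hmj | rfl | rfl | hjm : m < j ∨ m = j ∨ m = j + 1 ∨ j + 2 ≤ m := by omega
    · exact ⟨zigzagOuter m, zigzagOuter_mem_zigzagVerts_iff.2 (by omega),
        Or.inr (Or.inr (Or.inl ⟨m, hmj, rfl, rfl⟩))⟩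
    · exact ⟨zigzagCorner (m + 1), hcorner (by omega), Or.inl (Or.inl ⟨rfl, rfl⟩)⟩
    · exact ⟨zigzagCorner j, hcorner (by omega), Or.inr (Or.inl ⟨rfl, rfl⟩)⟩
    · obtain ⟨i, rfl⟩ : ∃ i, m = i + 2 := ⟨m - 2, by omega⟩
      exact ⟨zigzagOuter i, zigzagOuter_mem_zigzagVerts_iff.2 (by omega),
        Or.inr (Or.inr (Or.inr ⟨i, by omega, rfl, rfl⟩))⟩
  · have hm := zigzagOuter_mem_zigzagVerts_iff.1 ha
    by_cases hmj : m < j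
    · exact ⟨zigzagCorner m, zigzagCorner_mem_zigzagVerts_iff.2 ⟨by omega, by omega⟩,
        Or.inl (Or.inr (Or.inl ⟨m, hmj, rfl, rfl⟩))⟩
    · exact ⟨zigzagCorner (m + 2), zigzagCorner_mem_zigzagVerts_iff.2 ⟨by omega, by omega⟩,
        Or.inl (Or.inr (Or.inr ⟨m, by omega, rfl, rfl⟩))⟩

def zigzagCutMatching (d j : ℕ) : (zigzagGraph d).Subgraph where
  verts := Set.univ
  Adj u v := Relation.SymmGen (zigzagCutEdge j) u.1 v.1
  adj_sub := by
    rintro u v ((⟨hu, hv⟩ | ⟨i, -, hu, hv⟩ | ⟨i, -, hu, hv⟩) |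
      (⟨hv, hu⟩ | ⟨i, -, hv, hu⟩ | ⟨i, -, hv, hu⟩))
    · exact zigzagGraph_adj_of_zigzagCorner hu hv
    · exact zigzagGraph_adj_of_zigzagOuter hu (Or.inl hv)
    · exact zigzagGraph_adj_of_zigzagOuter hu (Or.inr hv)
    · exact (zigzagGraph_adj_of_zigzagCorner hv hu).symm
    · exact (zigzagGraph_adj_of_zigzagOuter hv (Or.inl hu)).symm
    · exact (zigzagGraph_adj_of_zigzagOuter hv (Or.inr hu)).symm
  edge_vert _ := Set.mem_univ _
  symm := ⟨fun _ _ => Or.symm⟩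

lemma zigzagCutMatching_isPerfectMatching {j : ℕ} (hj : j ≤ d) :
    (zigzagCutMatching d j).IsPerfectMatching := by
  refine Subgraph.isPerfectMatching_iff.2 fun u => ?_
  obtain ⟨b, hb, hub⟩ := exists_zigzagCutEdge hj u.2
  exact ⟨⟨b, hb⟩, hub, fun v huv => Subtype.ext (zigzagCutEdge_unique huv hub)⟩

lemma zigzagCutMatching_ne {p q : ℕ} (hpq : p < q) (hq : q ≤ d) :
    zigzagCutMatching d p ≠ zigzagCutMatching d q := by
  intro h
  have hmem {n : ℕ} (hn : n ≤ p + 1) : zigzagCorner n ∈ zigzagVerts d :=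
    zigzagCorner_mem_zigzagVerts_iff.2 ⟨by omega, by omega⟩
  have hspine : (zigzagCutMatching d p).Adj ⟨_, hmem p.le_succ⟩ ⟨_, hmem le_rfl⟩ :=
    Or.inl (Or.inl ⟨rfl, rfl⟩)
  rw [h] at hspine
  exact zigzagCorner_ne_zigzagOuter _ _
    (zigzagCutEdge_unique hspine (Or.inr (Or.inr (Or.inl ⟨p, hpq, rfl, rfl⟩))))

end CutMatching

section Forcing

variable {d : ℕ} {M : (zigzagGraph d).Subgraph}

lemma valAdj_zigzagCorner_succ (hM : M.IsPerfectMatching) {j : ℕ}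
    (hbelow : ∀ i < j, M.ValAdj (zigzagOuter i) (zigzagCorner i))
    (hcut : ¬ M.ValAdj (zigzagOuter j) (zigzagCorner j)) (hj : zigzagCorner j ∈ zigzagVerts d) :
    M.ValAdj (zigzagCorner j) (zigzagCorner (j + 1)) := by
  obtain ⟨b, hb⟩ := hM.exists_valAdj hj
  obtain ⟨_, _, hjb⟩ := id hb
  rcases eq_of_zigzagGraph_adj_zigzagCorner (M.adj_sub hjb) rfl with
    rfl | ⟨hj0, rfl⟩ | rfl | ⟨hj2, rfl⟩
  · exact hb
  · exact absurd (hM.1.valAdj_unique (hbelow _ (by omega)).symm hb.symm)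
      (zigzagCorner_ne_zigzagOuter _ _).symm
  · exact absurd hb.symm hcut
  · have := hM.1.valAdj_unique (hbelow _ (by omega)) hb.symm
    rw [zigzagCorner_inj] at this
    omega

lemma valAdj_zigzagOuter_add_two (hM : M.IsPerfectMatching) {j : ℕ}
    (hspine : M.ValAdj (zigzagCorner j) (zigzagCorner (j + 1))) (i : ℕ) (hji : j ≤ i)
    (hi : zigzagOuter i ∈ zigzagVerts d) : M.ValAdj (zigzagOuter i) (zigzagCorner (i + 2)) := by
  induction i using Nat.strong_induction_on with
  | _ i ih =>
    obtain ⟨b, hb⟩ := hM.exists_valAdj hi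
    obtain ⟨_, _, hib⟩ := id hb
    rcases eq_of_zigzagGraph_adj_zigzagOuter (M.adj_sub hib) rfl with rfl | rfl
    · exfalso
      obtain rfl | rfl | hji : i = j ∨ i = j + 1 ∨ j + 2 ≤ i := by omega
      · exact zigzagCorner_ne_zigzagOuter _ _ (hM.1.valAdj_unique hspine hb.symm)
      · exact zigzagCorner_ne_zigzagOuter _ _ (hM.1.valAdj_unique hspine.symm hb.symm)
      · obtain ⟨k, rfl⟩ : ∃ k, i = k + 2 := ⟨i - 2, by omega⟩
        have hk := ih k (by omega) (by omega) (zigzagOuter_mem_zigzagVerts_iff.2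
          (by have := zigzagOuter_mem_zigzagVerts_iff.1 hi; omega))
        have := hM.1.valAdj_unique hk.symm hb.symm
        rw [zigzagOuter_inj] at this
        omega
    · exact hb

lemma zigzagCutMatching_le (hM : M.IsPerfectMatching) {j : ℕ}
    (hbelow : ∀ i < j, M.ValAdj (zigzagOuter i) (zigzagCorner i))
    (hcut : ¬ M.ValAdj (zigzagOuter j) (zigzagCorner j)) : zigzagCutMatching d j ≤ M := by
  have hedge {a b : ℤ × ℤ} (h : zigzagCutEdge j a b) (ha : a ∈ zigzagVerts d)
      (hb : b ∈ zigzagVerts d) : M.ValAdj a b := by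
    rcases h with ⟨rfl, rfl⟩ | ⟨i, hi, rfl, rfl⟩ | ⟨i, hji, rfl, rfl⟩
    · exact valAdj_zigzagCorner_succ hM hbelow hcut ha
    · exact hbelow i hi
    · have hid := zigzagOuter_mem_zigzagVerts_iff.1 ha
      have hj := zigzagCorner_mem_zigzagVerts_iff.2 ⟨(by omega : 0 < d), (by omega : j ≤ d + 1)⟩
      exact valAdj_zigzagOuter_add_two hM (valAdj_zigzagCorner_succ hM hbelow hcut hj) i hji ha
  refine ⟨fun v _ => hM.2 v, ?_⟩
  rintro u v (huv | hvu)
  · obtain ⟨_, _, h⟩ := hedge huv u.2 v.2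
    exact h
  · obtain ⟨_, _, h⟩ := hedge hvu v.2 u.2
    exact h.symm

lemma exists_zigzagCutMatching_le (hM : M.IsPerfectMatching) :
    ∃ j ≤ d, zigzagCutMatching d j ≤ M := by
  classical
  have hd : ¬ M.ValAdj (zigzagOuter d) (zigzagCorner d) :=
    fun ⟨h, _⟩ => (zigzagOuter_mem_zigzagVerts_iff.1 h).false
  have hex : ∃ k, ¬ M.ValAdj (zigzagOuter k) (zigzagCorner k) := ⟨d, hd⟩
  exact ⟨Nat.find hex, Nat.find_min' hex hd, zigzagCutMatching_le hM
    (fun i hi => not_not.1 (Nat.find_min hex hi)) (Nat.find_spec hex)⟩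

end Forcing

theorem zigzag_num_perfect_matchings_general (d : ℕ) :
    {M : (zigzagGraph d).Subgraph | M.IsPerfectMatching}.ncard = d + 1 := by
  have hrange : {M : (zigzagGraph d).Subgraph | M.IsPerfectMatching} =
      Set.range fun j : Fin (d + 1) => zigzagCutMatching d j := by
    ext M
    refine ⟨fun hM => ?_, ?_⟩
    · obtain ⟨j, hj, hle⟩ := exists_zigzagCutMatching_le hM
      exact ⟨⟨j, by omega⟩, (zigzagCutMatching_isPerfectMatching hj).eq_of_le hM.1 hle⟩
    · rintro ⟨j, rfl⟩
      exact zigzagCutMatching_isPerfectMatching (Nat.lt_succ_iff.1 j.2)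
  have hinj : Function.Injective fun j : Fin (d + 1) => zigzagCutMatching d j := by
    intro p q h
    by_contra hpq
    rcases lt_or_gt_of_ne (Fin.val_ne_of_ne hpq) with hlt | hlt
    exacts [zigzagCutMatching_ne hlt (by omega) h, zigzagCutMatching_ne hlt (by omega) h.symm]
  rw [hrange, Set.ncard_range_of_injective hinj, Nat.card_eq_fintype_card, Fintype.card_fin]

/-- A zigzag snake graph with `d` tiles has exactly `d + 1` perfect matchings. -/
theorem zigzag_num_perfect_matchings (d : ℕ) (hd : 1 ≤ d) :
    {M : (zigzagGraph d).Subgraph | M.IsPerfectMatching}.ncard = d + 1 :=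
  zigzag_num_perfect_matchings_general d
end

section
/- Let k ≥ 1, let i_1 < i_2 < ⋯ < i_k be integers in I = {1,...,n}, and let a_1,...,a_k be integers satisfying: (a_j − a_{j−1})(a_{j+1} − a_j) < 0 for 2 ≤ j ≤ k−1, and |a_j − a_{j−1}| = i_j − i_{j−1} + 2 for 2 ≤ j ≤ k. Then there exists a function ξ: {1,...,n} → ℤ with |ξ(i) − ξ(i+1)| = 1 for all 1 ≤ i ≤ n−1 such that for each 1 ≤ ℓ ≤ k, either a_ℓ = ξ(i_ℓ) + 1 or a_ℓ = ξ(i_ℓ) − 1, and moreover ξ is strictly monotone on each interval [i_ℓ, i_{ℓ+1}] with the direction of monotonicity alternating between consecutive intervals. -/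
/-!
Let `ε ℓ = ±1` be the sign of `a (ℓ + 1) - a ℓ`. The gap condition says
`a (ℓ + 1) - a ℓ = ε ℓ * (i (ℓ + 1) - i ℓ + 2)` and the alternation condition says
`ε (ℓ + 1) = -ε ℓ`. Let `ξ` have slope `ε ℓ` on `[i ℓ, i (ℓ + 1)]`, normalised by
`ξ (i 1) = a 1 + ε 1`. If `ξ (i ℓ) = a ℓ + ε ℓ`, then
`ξ (i (ℓ + 1)) = a ℓ + ε ℓ * (i (ℓ + 1) - i ℓ + 1) = a (ℓ + 1) - ε ℓ = a (ℓ + 1) + ε (ℓ + 1)`,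
so `ξ` passes at distance one from every `a ℓ`.
-/

section PmSign

variable {R : Type*} [Ring R] [LinearOrder R]

-- Unlike `SignType.sign`, this is `-1` at `0`, so it is always `±1`.
def pmSign (d : R) : R := if 0 < d then 1 else -1

lemma pmSign_eq_one_or_neg_one (d : R) : pmSign d = 1 ∨ pmSign d = -1 := by
  unfold pmSign; split_ifs <;> simp

variable [IsStrictOrderedRing R]

lemma pmSign_mul_abs (d : R) : pmSign d * |d| = d := by
  unfold pmSign
  split_ifs with hd
  · rw [one_mul, abs_of_pos hd]
  · rw [abs_of_nonpos (not_lt.mp hd), neg_one_mul, neg_neg]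

lemma pmSign_eq_neg_of_mul_neg {d e : R} (h : d * e < 0) : pmSign e = -pmSign d := by
  unfold pmSign
  split_ifs with he hd hd
  · exact absurd h (mul_pos hd he).not_gt
  · rw [neg_neg]
  · rfl
  · exact absurd h (mul_nonneg_of_nonpos_of_nonpos (not_lt.mp hd) (not_lt.mp he)).not_gt

end PmSign

section Segments

variable {k : ℕ} {t : ℕ → ℕ}

lemma eq_of_mem_Ico_of_mem_Ico (ht : MonotoneOn t (Set.Icc 1 k)) {x ℓ m : ℕ}
    (hℓ : ℓ ∈ Set.Ico 1 k) (hm : m ∈ Set.Ico 1 k)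
    (hxℓ : x ∈ Set.Ico (t ℓ) (t (ℓ + 1))) (hxm : x ∈ Set.Ico (t m) (t (m + 1))) : ℓ = m := by
  have hsep : ∀ p q, p ∈ Set.Ico 1 k → q ∈ Set.Ico 1 k → p < q → t (p + 1) ≤ t q :=
    fun p q hp hq hpq ↦ ht ⟨by omega, hp.2⟩ ⟨hq.1, hq.2.le⟩ hpq
  rcases lt_trichotomy ℓ m with h | h | h
  · exact absurd (hsep ℓ m hℓ hm h) (by grind)
  · exact h
  · exact absurd (hsep m ℓ hm hℓ h) (by grind)

lemma exists_eq_on_Ico {α : Type*} {S : Set α} (ht : MonotoneOn t (Set.Icc 1 k)) {s : ℕ → α}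
    (hs : ∀ ℓ ∈ Set.Ico 1 k, s ℓ ∈ S) {c : α} (hc : c ∈ S) :
    ∃ σ : ℕ → α, (∀ x, σ x ∈ S) ∧
      ∀ ℓ ∈ Set.Ico 1 k, ∀ x ∈ Set.Ico (t ℓ) (t (ℓ + 1)), σ x = s ℓ := by
  classical
  let segment x ℓ := ℓ ∈ Set.Ico 1 k ∧ x ∈ Set.Ico (t ℓ) (t (ℓ + 1))
  refine ⟨fun x ↦ if h : ∃ ℓ, segment x ℓ then s h.choose else c, fun x ↦ ?_, fun ℓ hℓ x hx ↦ ?_⟩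
  · dsimp only
    split_ifs with h
    exacts [hs _ h.choose_spec.1, hc]
  · have h : ∃ ℓ, segment x ℓ := ⟨ℓ, hℓ, hx⟩
    simp only [dif_pos h]
    rw [eq_of_mem_Ico_of_mem_Ico ht h.choose_spec.1 hℓ h.choose_spec.2 hx]

end Segments

section Increments

variable {G : Type*} [AddCommGroup G]

lemma exists_eq_and_forall_sub_eq (σ : ℕ → G) (x₀ : ℕ) (v : G) :
    ∃ ξ : ℕ → G, ξ x₀ = v ∧ ∀ x, ξ (x + 1) - ξ x = σ x :=
  ⟨fun x ↦ v + ∑ y ∈ Finset.range x, σ y - ∑ y ∈ Finset.range x₀, σ y, by simp,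
    fun x ↦ by simp only [Finset.sum_range_succ]; abel⟩

lemma sub_eq_zsmul_of_forall_sub_eq {f : ℕ → G} {s : G} {p q : ℕ} (hpq : p ≤ q)
    (h : ∀ x ∈ Set.Ico p q, f (x + 1) - f x = s) : f q - f p = ((q : ℤ) - p) • s := by
  induction q, hpq using Nat.le_induction with
  | base => simp
  | succ q hpq ih =>
    rw [← sub_add_sub_cancel, h q ⟨hpq, q.lt_succ_self⟩,
      ih fun x hx ↦ h x ⟨hx.1, hx.2.trans q.lt_succ_self⟩]
    push_cast
    rw [add_sub_right_comm, add_zsmul, one_zsmul, add_comm]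

end Increments

section Nodes

variable {R : Type*} [CommRing R] {k : ℕ} {a b d ε : ℕ → R}

lemma eq_add_of_alternating_steps
    (ha : ∀ ℓ ∈ Set.Ico 1 k, a (ℓ + 1) - a ℓ = ε ℓ * (d ℓ + 2))
    (hb : ∀ ℓ ∈ Set.Ico 1 k, b (ℓ + 1) - b ℓ = ε ℓ * d ℓ)
    (hε : ∀ ℓ, 1 ≤ ℓ → ℓ + 2 ≤ k → ε (ℓ + 1) = -ε ℓ) (h₁ : b 1 = a 1 + ε 1) :
    ∀ ℓ ∈ Set.Ico 1 k, b ℓ = a ℓ + ε ℓ := by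
  intro ℓ ⟨hℓ, hℓk⟩
  induction ℓ, hℓ using Nat.le_induction with
  | base => exact h₁
  | succ ℓ hℓ ih =>
    rw [hε ℓ hℓ hℓk]
    linear_combination ih (by omega) + hb ℓ ⟨hℓ, by omega⟩ - ha ℓ ⟨hℓ, by omega⟩

lemma eq_add_one_or_eq_sub_one_of_alternating_steps (hε₁ : ∀ ℓ, ε ℓ = 1 ∨ ε ℓ = -1)
    (ha : ∀ ℓ ∈ Set.Ico 1 k, a (ℓ + 1) - a ℓ = ε ℓ * (d ℓ + 2))
    (hb : ∀ ℓ ∈ Set.Ico 1 k, b (ℓ + 1) - b ℓ = ε ℓ * d ℓ)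
    (hε : ∀ ℓ, 1 ≤ ℓ → ℓ + 2 ≤ k → ε (ℓ + 1) = -ε ℓ) (h₁ : b 1 = a 1 + ε 1) :
    ∀ ℓ, 1 ≤ ℓ → ℓ ≤ k → a ℓ = b ℓ + 1 ∨ a ℓ = b ℓ - 1 := by
  have hnode := eq_add_of_alternating_steps ha hb hε h₁
  suffices h : ∀ ℓ, 1 ≤ ℓ → ℓ ≤ k → ∃ m, a ℓ = b ℓ + ε m ∨ a ℓ = b ℓ - ε m by
    intro ℓ hℓ hℓk
    obtain ⟨m, hm⟩ := h ℓ hℓ hℓk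
    rcases hε₁ m with h | h <;> rw [h] at hm
    · exact hm
    · rwa [sub_neg_eq_add, ← sub_eq_add_neg, or_comm] at hm
  intro ℓ hℓ hℓk
  obtain hℓk | rfl := hℓk.lt_or_eq
  · exact ⟨ℓ, .inr (by rw [hnode ℓ ⟨hℓ, hℓk⟩]; ring)⟩
  obtain rfl | hk := hℓ.eq_or_lt
  · exact ⟨1, .inr (by rw [h₁]; ring)⟩
  obtain ⟨m, rfl⟩ : ∃ m, ℓ = m + 1 := ⟨ℓ - 1, by omega⟩
  have hm : m ∈ Set.Ico 1 (m + 1) := ⟨by omega, by omega⟩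
  exact ⟨m, .inl (by linear_combination ha m hm - hb m hm - hnode m hm)⟩

end Nodes

theorem exists_height_function_general (n k : ℕ) (i : ℕ → ℕ) (a : ℕ → ℤ)
    (hmono : ∀ j, 1 ≤ j → j < k → i j < i (j + 1))
    (halt : ∀ j, 2 ≤ j → j + 1 ≤ k → (a j - a (j - 1)) * (a (j + 1) - a j) < 0)
    (hgap : ∀ j, 2 ≤ j → j ≤ k → |a j - a (j - 1)| = (i j : ℤ) - (i (j - 1) : ℤ) + 2) :
    ∃ ξ : ℕ → ℤ,
      (∀ x, 1 ≤ x → x + 1 ≤ n → |ξ x - ξ (x + 1)| = 1) ∧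
      (∀ ℓ, 1 ≤ ℓ → ℓ ≤ k → a ℓ = ξ (i ℓ) + 1 ∨ a ℓ = ξ (i ℓ) - 1) ∧
      ∃ s : ℕ → ℤ,
        (∀ ℓ, 1 ≤ ℓ → ℓ + 1 ≤ k →
          (s ℓ = 1 ∨ s ℓ = -1) ∧ ∀ x, i ℓ ≤ x → x < i (ℓ + 1) → ξ (x + 1) - ξ x = s ℓ) ∧
        (∀ ℓ, 1 ≤ ℓ → ℓ + 2 ≤ k → s (ℓ + 1) = -s ℓ) := by
  set ε : ℕ → ℤ := fun ℓ ↦ pmSign (a (ℓ + 1) - a ℓ)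
  have hε₁ (ℓ : ℕ) : ε ℓ = 1 ∨ ε ℓ = -1 := pmSign_eq_one_or_neg_one _
  have ha (ℓ : ℕ) (hℓ : ℓ ∈ Set.Ico 1 k) :
      a (ℓ + 1) - a ℓ = ε ℓ * ((i (ℓ + 1) - i ℓ : ℤ) + 2) := by
    have h := hgap (ℓ + 1) (Nat.succ_le_succ hℓ.1) hℓ.2
    rw [Nat.add_sub_cancel] at h
    rw [← h, pmSign_mul_abs]
  have hε (ℓ : ℕ) (hℓ : 1 ≤ ℓ) (hℓk : ℓ + 2 ≤ k) : ε (ℓ + 1) = -ε ℓ :=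
    pmSign_eq_neg_of_mul_neg (halt (ℓ + 1) (by omega) hℓk)
  have hi : MonotoneOn i (Set.Icc 1 k) :=
    monotoneOn_of_le_add_one Set.ordConnected_Icc fun j _ hj hj' ↦ (hmono j hj.1 hj'.2).le
  obtain ⟨σ, hσ₁, hσ⟩ := exists_eq_on_Ico (S := {1, -1}) hi (fun ℓ _ ↦ hε₁ ℓ) (Or.inl rfl)
  obtain ⟨ξ, hξ₁, hξ⟩ := exists_eq_and_forall_sub_eq σ (i 1) (a 1 + ε 1)
  have hξε (ℓ : ℕ) (hℓ : ℓ ∈ Set.Ico 1 k) (x : ℕ) (hx : x ∈ Set.Ico (i ℓ) (i (ℓ + 1))) :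
      ξ (x + 1) - ξ x = ε ℓ :=
    (hξ x).trans (hσ ℓ hℓ x hx)
  have hb (ℓ : ℕ) (hℓ : ℓ ∈ Set.Ico 1 k) :
      ξ (i (ℓ + 1)) - ξ (i ℓ) = ε ℓ * (i (ℓ + 1) - i ℓ : ℤ) := by
    rw [sub_eq_zsmul_of_forall_sub_eq (hmono ℓ hℓ.1 hℓ.2).le (hξε ℓ hℓ), smul_eq_mul, mul_comm]
  refine ⟨ξ, fun x _ _ ↦ ?_, eq_add_one_or_eq_sub_one_of_alternating_steps hε₁ ha hb hε hξ₁,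
    ε, fun ℓ hℓ hℓk ↦ ⟨hε₁ ℓ, fun x hx hx' ↦ hξε ℓ ⟨hℓ, hℓk⟩ x ⟨hx, hx'⟩⟩, hε⟩
  rw [abs_sub_comm, hξ]
  obtain h | h : σ x = 1 ∨ σ x = -1 := hσ₁ x <;> simp [h]

/-- Characterization of highest ℓ-weight monomials of Hernandez–Leclerc modules:
given indices `i 1 < i 2 < ⋯ < i k` in `{1,...,n}` and integers `a 1, ..., a k` with
`(a j − a (j−1)) * (a (j+1) − a j) < 0` for `2 ≤ j ≤ k−1` and
`|a j − a (j−1)| = i j − i (j−1) + 2` for `2 ≤ j ≤ k`, there is a height function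
`ξ : {1,...,n} → ℤ` with each `a ℓ = ξ (i ℓ) ± 1`, and `ξ` strictly monotone on each
interval `[i ℓ, i (ℓ+1)]` with alternating directions. -/
theorem exists_height_function (n k : ℕ) (hk : 1 ≤ k) (i : ℕ → ℕ) (a : ℕ → ℤ)
    (hrange : ∀ j, 1 ≤ j → j ≤ k → 1 ≤ i j ∧ i j ≤ n)
    (hmono : ∀ j, 1 ≤ j → j < k → i j < i (j + 1))
    (halt : ∀ j, 2 ≤ j → j + 1 ≤ k → (a j - a (j - 1)) * (a (j + 1) - a j) < 0)
    (hgap : ∀ j, 2 ≤ j → j ≤ k → |a j - a (j - 1)| = (i j : ℤ) - (i (j - 1) : ℤ) + 2) :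
    ∃ ξ : ℕ → ℤ,
      (∀ x, 1 ≤ x → x + 1 ≤ n → |ξ x - ξ (x + 1)| = 1) ∧
      (∀ ℓ, 1 ≤ ℓ → ℓ ≤ k → a ℓ = ξ (i ℓ) + 1 ∨ a ℓ = ξ (i ℓ) - 1) ∧
      ∃ s : ℕ → ℤ,
        (∀ ℓ, 1 ≤ ℓ → ℓ + 1 ≤ k →
          (s ℓ = 1 ∨ s ℓ = -1) ∧ ∀ x, i ℓ ≤ x → x < i (ℓ + 1) → ξ (x + 1) - ξ x = s ℓ) ∧
        (∀ ℓ, 1 ≤ ℓ → ℓ + 2 ≤ k → s (ℓ + 1) = -s ℓ) :=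
  exists_height_function_general n k i a hmono halt hgap
end

section
/- Let ξ: {1,...,n} → ℤ be a height function (|ξ(i)−ξ(i+1)| = 1), let 1 ≤ i < j ≤ n, and let i = i_1 < i_2 < ⋯ < i_k = j where i_2 < ⋯ < i_{k−1} enumerate the points p with i < p < j and ξ(p−1) = ξ(p+1). Define a_1 = ξ(i) + 1 if ξ(i+1) = ξ(i) − 1 and a_1 = ξ(i) − 1 if ξ(i+1) = ξ(i) + 1, and for ℓ ≥ 2 define a_ℓ = ξ(i_ℓ) + 1 if ξ(i_ℓ) = ξ(i_ℓ−1) + 1 and a_ℓ = ξ(i_ℓ) − 1 if ξ(i_ℓ) = ξ(i_ℓ−1) − 1. Then for all 2 ≤ ℓ ≤ k−1, (a_ℓ − a_{ℓ−1})(a_{ℓ+1} − a_ℓ) < 0, and for all 2 ≤ ℓ ≤ k, |a_ℓ − a_{ℓ−1}| = i_ℓ − i_{ℓ−1} + 2. -/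
/-!
The steps `ξ (p + 1) - ξ p` are `±1`, and two consecutive ones are equal unless
`ξ (p - 1) = ξ (p + 1)`. So on each segment `[i_ℓ, i_{ℓ+1}]` the step is a constant `σ_ℓ`, `ξ` is
affine there, and `σ_ℓ` changes sign at every interior turning point. Both clauses defining `a ℓ`
say that `a ℓ = 2 ξ(i_ℓ) - ξ(i_ℓ - 1)` is the reflection of the preceding value through `ξ(i_ℓ)`,
and `a 1 = 2 ξ(i_1) - ξ(i_1 + 1)`; at an interior turning point both neighbouring values agree,
so `a ℓ` is also the reflection of the following one. Hence
`a (ℓ + 1) - a ℓ = σ_ℓ (i_{ℓ+1} - i_ℓ + 2)`.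
-/

theorem Int.sub_eq_sub_of_abs_sub_eq_one_of_ne {x y z : ℤ} (hxy : |y - x| = 1)
    (hyz : |z - y| = 1) (hxz : x ≠ z) : z - y = y - x := by
  rcases (abs_eq zero_le_one).1 hxy with h | h <;>
    rcases (abs_eq zero_le_one).1 hyz with h' | h' <;> omega

theorem Int.eq_two_mul_sub_of_abs_sub_eq_one {x y c : ℤ} (h : |x - y| = 1)
    (hup : x = y + 1 → c = x + 1) (hdown : x = y - 1 → c = x - 1) : c = 2 * x - y := by
  rcases (abs_eq zero_le_one).1 h with h | h
  · rw [hup (by omega)]; omega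
  · rw [hdown (by omega)]; omega

theorem Int.mul_mul_neg_mul_neg_of_abs_eq_one {σ x y : ℤ} (hσ : |σ| = 1) (hx : 0 < x)
    (hy : 0 < y) : σ * x * (-σ * y) < 0 := by
  have hσσ : σ * σ = 1 := by rw [← abs_mul_abs_self, hσ, one_mul]
  linear_combination (-(x * y)) * hσσ + mul_pos hx hy

section Segment

variable {ξ : ℕ → ℤ} {b₀ b₁ : ℕ}

theorem step_eq_of_forall_ne (hunit : ∀ p, b₀ ≤ p → p < b₁ → |ξ (p + 1) - ξ p| = 1)
    (hno : ∀ p, b₀ < p → p < b₁ → ξ (p - 1) ≠ ξ (p + 1)) :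
    ∀ p, b₀ ≤ p → p < b₁ → ξ (p + 1) - ξ p = ξ (b₀ + 1) - ξ b₀ := by
  intro p hp
  induction p, hp using Nat.le_induction with
  | base => exact fun _ => rfl
  | succ p hp ih =>
    intro hp'
    rw [← ih (by omega)]
    refine Int.sub_eq_sub_of_abs_sub_eq_one_of_ne (hunit p hp (by omega))
      (hunit (p + 1) (by omega) hp') ?_
    simpa using hno (p + 1) (by omega) hp'

theorem eq_add_mul_of_step_eq {σ : ℤ} (hstep : ∀ p, b₀ ≤ p → p < b₁ → ξ (p + 1) - ξ p = σ) :
    ∀ q, b₀ ≤ q → q ≤ b₁ → ξ q = ξ b₀ + σ * ((q : ℤ) - b₀) := by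
  intro q hq
  induction q, hq using Nat.le_induction with
  | base => simp
  | succ q hq ih =>
    intro hq'
    push_cast
    linear_combination hstep q hq (by omega) + ih (by omega)

theorem last_step_eq_first_step (hunit : ∀ p, b₀ ≤ p → p < b₁ → |ξ (p + 1) - ξ p| = 1)
    (hno : ∀ p, b₀ < p → p < b₁ → ξ (p - 1) ≠ ξ (p + 1)) (hlt : b₀ < b₁) :
    ξ b₁ - ξ (b₁ - 1) = ξ (b₀ + 1) - ξ b₀ := by
  simpa [Nat.sub_add_cancel (by omega : 1 ≤ b₁)] using
    step_eq_of_forall_ne hunit hno (b₁ - 1) (by omega) (by omega)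

theorem reflect_sub_reflect_eq (hunit : ∀ p, b₀ ≤ p → p < b₁ → |ξ (p + 1) - ξ p| = 1)
    (hno : ∀ p, b₀ < p → p < b₁ → ξ (p - 1) ≠ ξ (p + 1)) (hlt : b₀ < b₁) :
    (2 * ξ b₁ - ξ (b₁ - 1)) - (2 * ξ b₀ - ξ (b₀ + 1)) =
      (ξ (b₀ + 1) - ξ b₀) * ((b₁ : ℤ) - b₀ + 2) := by
  linear_combination last_step_eq_first_step hunit hno hlt +
    eq_add_mul_of_step_eq (step_eq_of_forall_ne hunit hno) b₁ hlt.le le_rfl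

end Segment

theorem MonotoneOn.ne_of_lt_of_lt_add_one {f : ℕ → ℕ} {s : Set ℕ} {m ℓ p : ℕ}
    (hf : MonotoneOn f s) (hm : m ∈ s) (hm' : m + 1 ∈ s) (hℓ : ℓ ∈ s)
    (hp : f m < p) (hp' : p < f (m + 1)) : f ℓ ≠ p := by
  rcases le_or_gt ℓ m with h | h
  · exact (lt_of_le_of_lt (hf hℓ hm h) hp).ne
  · exact (lt_of_lt_of_le hp' (hf hm' hℓ h)).ne'

theorem forall_ne_of_enumerates {ξ : ℕ → ℤ} {is : ℕ → ℕ} {k m : ℕ}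
    (hmono : MonotoneOn is (Set.Icc 1 k))
    (hall : ∀ p, is 1 < p → p < is k → ξ (p - 1) = ξ (p + 1) →
      ∃ ℓ, 2 ≤ ℓ ∧ ℓ + 1 ≤ k ∧ is ℓ = p)
    (hm : 1 ≤ m) (hmk : m < k) :
    ∀ p, is m < p → p < is (m + 1) → ξ (p - 1) ≠ ξ (p + 1) := by
  intro p hp hp' hturn
  have : is 1 ≤ is m := hmono ⟨le_rfl, by omega⟩ ⟨hm, hmk.le⟩ hm
  have : is (m + 1) ≤ is k := hmono ⟨by omega, hmk⟩ ⟨by omega, le_rfl⟩ hmk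
  obtain ⟨ℓ, hℓ, hℓk, rfl⟩ := hall p (by omega) (by omega) hturn
  exact hmono.ne_of_lt_of_lt_add_one ⟨hm, hmk.le⟩ ⟨by omega, hmk⟩ ⟨by omega, by omega⟩ hp hp' rfl

theorem hl_conditions_of_reflect {ξ : ℕ → ℤ} {is : ℕ → ℕ} {a : ℕ → ℤ} {k : ℕ}
    (hmono : ∀ m, 1 ≤ m → m < k → is m < is (m + 1))
    (hunit : ∀ m, 1 ≤ m → m < k → ∀ p, is m ≤ p → p < is (m + 1) → |ξ (p + 1) - ξ p| = 1)
    (hno : ∀ m, 1 ≤ m → m < k → ∀ p, is m < p → p < is (m + 1) → ξ (p - 1) ≠ ξ (p + 1))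
    (hturn : ∀ m, 1 ≤ m → m + 1 < k → ξ (is (m + 1) - 1) = ξ (is (m + 1) + 1))
    (hlead : ∀ m, 1 ≤ m → m < k → a m = 2 * ξ (is m) - ξ (is m + 1))
    (htrail : ∀ m, 1 ≤ m → m < k → a (m + 1) = 2 * ξ (is (m + 1)) - ξ (is (m + 1) - 1)) :
    (∀ ℓ, 2 ≤ ℓ → ℓ + 1 ≤ k → (a ℓ - a (ℓ - 1)) * (a (ℓ + 1) - a ℓ) < 0) ∧
    (∀ ℓ, 2 ≤ ℓ → ℓ ≤ k → |a ℓ - a (ℓ - 1)| = (is ℓ : ℤ) - (is (ℓ - 1) : ℤ) + 2) := by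
  have hdiff : ∀ m, 1 ≤ m → m < k → a (m + 1) - a m =
      (ξ (is m + 1) - ξ (is m)) * ((is (m + 1) : ℤ) - is m + 2) := fun m h1 h2 => by
    rw [htrail m h1 h2, hlead m h1 h2]
    exact reflect_sub_reflect_eq (hunit m h1 h2) (hno m h1 h2) (hmono m h1 h2)
  have hflip : ∀ m, 1 ≤ m → m + 1 < k →
      ξ (is (m + 1) + 1) - ξ (is (m + 1)) = -(ξ (is m + 1) - ξ (is m)) := fun m h1 h2 => by
    rw [← hturn m h1 h2, ← last_step_eq_first_step (hunit m h1 (by omega))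
      (hno m h1 (by omega)) (hmono m h1 (by omega))]
    ring
  refine ⟨fun ℓ h2 hk => ?_, fun ℓ h2 hk => ?_⟩
  · obtain ⟨m, rfl⟩ : ∃ m, ℓ = m + 1 := ⟨ℓ - 1, by omega⟩
    have hσ := hunit m (by omega) (by omega) _ le_rfl (hmono m (by omega) (by omega))
    have := hmono m (by omega) (by omega)
    have := hmono (m + 1) (by omega) (by omega)
    rw [Nat.add_sub_cancel, hdiff m (by omega) (by omega), hdiff (m + 1) (by omega) (by omega),
      hflip m (by omega) (by omega)]
    exact Int.mul_mul_neg_mul_neg_of_abs_eq_one hσ (by omega) (by omega)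
  · obtain ⟨m, rfl⟩ : ∃ m, ℓ = m + 1 := ⟨ℓ - 1, by omega⟩
    have := hmono m (by omega) (by omega)
    rw [Nat.add_sub_cancel, hdiff m (by omega) (by omega), abs_mul,
      hunit m (by omega) (by omega) _ le_rfl (hmono m (by omega) (by omega)), one_mul]
    exact abs_of_nonneg (by omega)

theorem hl_monomial_conditions_general (n k : ℕ) (ξ : ℕ → ℤ) (i j : ℕ)
    (hi1 : 1 ≤ i) (hjn : j ≤ n)
    (hheight : ∀ x, 1 ≤ x → x + 1 ≤ n → |ξ x - ξ (x + 1)| = 1)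
    (is : ℕ → ℕ)
    (hfirst : is 1 = i) (hlast : is k = j)
    (hmono : ∀ ℓ, 1 ≤ ℓ → ℓ < k → is ℓ < is (ℓ + 1))
    (hturn : ∀ ℓ, 2 ≤ ℓ → ℓ + 1 ≤ k →
      i < is ℓ ∧ is ℓ < j ∧ ξ (is ℓ - 1) = ξ (is ℓ + 1))
    (hall : ∀ p, i < p → p < j → ξ (p - 1) = ξ (p + 1) →
      ∃ ℓ, 2 ≤ ℓ ∧ ℓ + 1 ≤ k ∧ is ℓ = p)
    (a : ℕ → ℤ)
    (ha1 : (ξ (i + 1) = ξ i - 1 → a 1 = ξ i + 1) ∧ (ξ (i + 1) = ξ i + 1 → a 1 = ξ i - 1))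
    (hal : ∀ ℓ, 2 ≤ ℓ → ℓ ≤ k →
      (ξ (is ℓ) = ξ (is ℓ - 1) + 1 → a ℓ = ξ (is ℓ) + 1) ∧
      (ξ (is ℓ) = ξ (is ℓ - 1) - 1 → a ℓ = ξ (is ℓ) - 1)) :
    (∀ ℓ, 2 ≤ ℓ → ℓ + 1 ≤ k → (a ℓ - a (ℓ - 1)) * (a (ℓ + 1) - a ℓ) < 0) ∧
    (∀ ℓ, 2 ≤ ℓ → ℓ ≤ k → |a ℓ - a (ℓ - 1)| = (is ℓ : ℤ) - (is (ℓ - 1) : ℤ) + 2) := by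
  subst hfirst hlast
  have hmonoOn : MonotoneOn is (Set.Icc 1 k) := (strictMonoOn_of_lt_add_one Set.ordConnected_Icc
    fun m _ hm hm' => hmono m hm.1 hm'.2).monotoneOn
  have hunit : ∀ m, 1 ≤ m → m < k → ∀ p, is m ≤ p → p < is (m + 1) →
      |ξ (p + 1) - ξ p| = 1 := fun m h1 h2 p hp hp' => by
    have : is 1 ≤ is m := hmonoOn ⟨le_rfl, by omega⟩ ⟨h1, h2.le⟩ h1
    have : is (m + 1) ≤ is k := hmonoOn ⟨by omega, h2⟩ ⟨by omega, le_rfl⟩ h2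
    rw [abs_sub_comm]
    exact hheight p (by omega) (by omega)
  have htrail : ∀ m, 1 ≤ m → m < k →
      a (m + 1) = 2 * ξ (is (m + 1)) - ξ (is (m + 1) - 1) := fun m h1 h2 => by
    have hm := hmono m h1 h2
    have hstep := hunit m h1 h2 (is (m + 1) - 1) (by omega) (by omega)
    rw [Nat.sub_add_cancel (by omega)] at hstep
    exact Int.eq_two_mul_sub_of_abs_sub_eq_one hstep (hal (m + 1) (by omega) h2).1
      (hal (m + 1) (by omega) h2).2
  have hlead : ∀ m, 1 ≤ m → m < k → a m = 2 * ξ (is m) - ξ (is m + 1) := by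
    intro m h1 h2
    rcases h1.eq_or_lt with rfl | h1
    · exact Int.eq_two_mul_sub_of_abs_sub_eq_one
        ((abs_sub_comm _ _).trans (hunit 1 le_rfl h2 _ le_rfl (hmono 1 le_rfl h2)))
        (fun _ => ha1.1 (by omega)) (fun _ => ha1.2 (by omega))
    · obtain ⟨m, rfl⟩ : ∃ m', m = m' + 1 := ⟨m - 1, by omega⟩
      rw [← (hturn (m + 1) h1 h2).2.2]
      exact htrail m (by omega) (by omega)
  exact hl_conditions_of_reflect hmono hunit
    (fun m h1 h2 => forall_ne_of_enumerates hmonoOn hall h1 h2)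
    (fun m h1 h2 => (hturn (m + 1) (by omega) h2).2.2) hlead htrail

/-- Converse direction of the characterization of HL highest weight monomials:
given a height function `ξ` on `{1,...,n}`, `1 ≤ i < j ≤ n`, the enumeration
`i = is 1 < is 2 < ⋯ < is k = j` where `is 2 < ⋯ < is (k−1)` enumerate the turning
points `p` with `i < p < j` and `ξ (p−1) = ξ (p+1)`, and the integers `a ℓ` defined
from `ξ` as in Brito–Chari, the sequences satisfy the alternation and gap conditions. -/
theorem hl_monomial_conditions (n k : ℕ) (hk : 2 ≤ k) (ξ : ℕ → ℤ) (i j : ℕ)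
    (hi1 : 1 ≤ i) (hij : i < j) (hjn : j ≤ n)
    (hheight : ∀ x, 1 ≤ x → x + 1 ≤ n → |ξ x - ξ (x + 1)| = 1)
    (is : ℕ → ℕ)
    (hfirst : is 1 = i) (hlast : is k = j)
    (hmono : ∀ ℓ, 1 ≤ ℓ → ℓ < k → is ℓ < is (ℓ + 1))
    (hturn : ∀ ℓ, 2 ≤ ℓ → ℓ + 1 ≤ k →
      i < is ℓ ∧ is ℓ < j ∧ ξ (is ℓ - 1) = ξ (is ℓ + 1))
    (hall : ∀ p, i < p → p < j → ξ (p - 1) = ξ (p + 1) →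
      ∃ ℓ, 2 ≤ ℓ ∧ ℓ + 1 ≤ k ∧ is ℓ = p)
    (a : ℕ → ℤ)
    (ha1 : (ξ (i + 1) = ξ i - 1 → a 1 = ξ i + 1) ∧ (ξ (i + 1) = ξ i + 1 → a 1 = ξ i - 1))
    (hal : ∀ ℓ, 2 ≤ ℓ → ℓ ≤ k →
      (ξ (is ℓ) = ξ (is ℓ - 1) + 1 → a ℓ = ξ (is ℓ) + 1) ∧
      (ξ (is ℓ) = ξ (is ℓ - 1) - 1 → a ℓ = ξ (is ℓ) - 1)) :
    (∀ ℓ, 2 ≤ ℓ → ℓ + 1 ≤ k → (a ℓ - a (ℓ - 1)) * (a (ℓ + 1) - a ℓ) < 0) ∧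
    (∀ ℓ, 2 ≤ ℓ → ℓ ≤ k → |a ℓ - a (ℓ - 1)| = (is ℓ : ℤ) - (is (ℓ - 1) : ℤ) + 2) :=
  hl_monomial_conditions_general n k ξ i j hi1 hjn hheight is hfirst hlast hmono hturn hall a ha1
    hal
end
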